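/- arXiv:2502.19522 — 5 statements merged into one kernel-verified Lean document; each statement's English description precedes it below -/
import Mathlib

section
/- Fix α ∈ (0,1) with α ≠ 1/2. There is no τ ∈ ℝ such that the classifier x ↦ sign(x1 + τ) agrees almost everywhere (with respect to Lebesgue measure on ℝ × (0,1]) with the classifier x ↦ sign(x1 - (x2/2)·log(α/(1-α))). -/
/-- Sign function valued in `{-1, 1}` (with `sign 0 = 1`). -/
noncomputable def mySign (t : ℝ) : ℝ := if 0 ≤ t then 1 else -1

theorem stmt4 (α : ℝ) (hα : α ∈ Set.Ioo (0 : ℝ) 1) (hαhalf : α ≠ 1 / 2) (τ : ℝ) :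
    0 < MeasureTheory.volume {x : ℝ × ℝ | x.2 ∈ Set.Ioc (0 : ℝ) 1 ∧
      mySign (x.1 + τ) ≠ mySign (x.1 - (x.2 / 2) * Real.log (α / (1 - α)))} := by
  obtain ⟨hα0, hα1⟩ := hα
  set L := Real.log (α / (1 - α)) with hLdef
  have h1α : (0:ℝ) < 1 - α := by linarith
  have hL : L ≠ 0 := by
    intro h
    rcases Real.log_eq_zero.mp h with h' | h' | h'
    · have : (0:ℝ) < α / (1 - α) := by positivity
      linarith [h' ▸ this]
    · have : α = 1 - α := by
        field_simp at h'
        linarith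
      apply hαhalf; linarith
    · have : (0:ℝ) < α / (1 - α) := by positivity
      linarith [h' ▸ this]
  set c := L / 2 with hcdef
  have hc : c ≠ 0 := div_ne_zero hL two_ne_zero
  have hcabs : 0 < |c| := abs_pos.mpr hc
  set δ := |c| / 8 with hδdef
  have hδpos : 0 < δ := by positivity
  -- choose a good center p
  obtain ⟨p, hp1, hp2, hpf⟩ : ∃ p : ℝ, (1:ℝ)/8 ≤ p - 1/8 ∧ p + 1/8 ≤ 1 ∧
      |c| / 4 ≤ |c * p + τ| := by
    by_cases h : |c| / 4 ≤ |c * (3/4) + τ|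
    · exact ⟨3/4, by norm_num, by norm_num, h⟩
    · refine ⟨1/4, by norm_num, by norm_num, ?_⟩
      push_neg at h
      have h2 : |c/2| ≤ |c * (3/4) + τ| + |c * (1/4) + τ| := by
        have habs := abs_add_le (c * (3/4) + τ) (-(c * (1/4) + τ))
        rw [abs_neg] at habs
        calc |c/2| = |(c * (3/4) + τ) + -(c * (1/4) + τ)| := by ring_nf
          _ ≤ _ := habs
      have h3 : |c/2| = |c| / 2 := by
        rw [abs_div]; norm_num
      linarith
  -- bound c*y + τ on the interval around p
  have hyoff : ∀ y ∈ Set.Ioo (p - 1/8) (p + 1/8), |c * (y - p)| ≤ |c| / 8 := by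
    intro y hy
    have hyp : |y - p| ≤ 1/8 := by
      rw [abs_le]; constructor <;> [linarith [hy.1]; linarith [hy.2]]
    calc |c * (y - p)| = |c| * |y - p| := abs_mul _ _
      _ ≤ |c| * (1/8) := by
          exact mul_le_mul_of_nonneg_left hyp (abs_nonneg c)
      _ = |c| / 8 := by ring
  -- pick the rectangle
  obtain ⟨a, hrect⟩ : ∃ a : ℝ, ∀ x ∈ Set.Ico a (a + δ), ∀ y ∈ Set.Ioo (p - 1/8) (p + 1/8),
      mySign (x + τ) ≠ mySign (x - (y / 2) * L) := by
    have hcy : ∀ y : ℝ, (y / 2) * L = c * y := by intro y; rw [hcdef]; ring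
    rcases le_or_gt 0 (c * p + τ) with hsgn | hsgn
    · -- c*p+τ ≥ |c|/4
      have hpτ : |c| / 4 ≤ c * p + τ := by rwa [abs_of_nonneg hsgn] at hpf
      refine ⟨-τ, fun x hx y hy => ?_⟩
      have hcyb : δ ≤ c * y + τ := by
        have h1 := hyoff y hy
        have h2 := neg_abs_le (c * (y - p))
        have : c * y + τ = (c * p + τ) + c * (y - p) := by ring
        rw [hδdef]; linarith
      have hs1 : mySign (x + τ) = 1 := by
        rw [mySign, if_pos (by linarith [hx.1])]
      have hs2 : mySign (x - (y / 2) * L) = -1 := by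
        rw [hcy y, mySign, if_neg (by push_neg; linarith [hx.2])]
      rw [hs1, hs2]; norm_num
    · -- c*p+τ ≤ -|c|/4
      have hpτ : c * p + τ ≤ -(|c| / 4) := by
        rw [abs_of_neg hsgn] at hpf; linarith
      refine ⟨-τ - δ, fun x hx y hy => ?_⟩
      have hcyb : c * y + τ ≤ -δ := by
        have h1 := hyoff y hy
        have h2 := le_abs_self (c * (y - p))
        have : c * y + τ = (c * p + τ) + c * (y - p) := by ring
        rw [hδdef]; linarith
      have hs1 : mySign (x + τ) = -1 := by
        rw [mySign, if_neg (by push_neg; have := hx.2; linarith)]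
      have hs2 : mySign (x - (y / 2) * L) = 1 := by
        rw [hcy y, mySign, if_pos (by have := hx.1; linarith)]
      rw [hs1, hs2]; norm_num
  -- the rectangle is inside the disagreement set
  have hsub : Set.Ico a (a + δ) ×ˢ Set.Ioo (p - 1/8) (p + 1/8) ⊆
      {x : ℝ × ℝ | x.2 ∈ Set.Ioc (0 : ℝ) 1 ∧
        mySign (x.1 + τ) ≠ mySign (x.1 - (x.2 / 2) * Real.log (α / (1 - α)))} := by
    rintro ⟨x, y⟩ ⟨hx, hy⟩
    refine ⟨⟨by linarith [hy.1], by linarith [hy.2]⟩, ?_⟩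
    exact hrect x hx y hy
  calc (0 : ENNReal) < ENNReal.ofReal δ * ENNReal.ofReal (1/4) := by
        apply ENNReal.mul_pos <;>
          simp [ENNReal.ofReal_pos, hδpos]
    _ = MeasureTheory.volume (Set.Ico a (a + δ) ×ˢ Set.Ioo (p - 1/8) (p + 1/8)) := by
        rw [MeasureTheory.Measure.volume_eq_prod, MeasureTheory.Measure.prod_prod,
          Real.volume_Ico, Real.volume_Ioo]
        congr 1 <;> [skip; skip] <;> ring_nf
    _ ≤ _ := MeasureTheory.measure_mono hsub
end

section
/- For α ∈ (0,1), α ≠ 1/2, under the distribution of Example 1 (Y ~ Bernoulli(1/2), x2 ~ U[0,1], x1 ~ N(y·x2, x2²)), for every τ ∈ ℝ the expected cost-sensitive loss of the thresholded classifier x ↦ sign(x1 + τ) is strictly larger than the Bayes-optimal expected cost-sensitive loss E ℓ^α(sign(x1 - (x2/2)·log(α/(1-α))), Y). -/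
/-- Standard normal density. -/
noncomputable def gaussPdf (t : ℝ) : ℝ := (Real.sqrt (2 * Real.pi))⁻¹ * Real.exp (-t ^ 2 / 2)

/-- Binary cost-sensitive loss `ℓ^α`. -/
noncomputable def csCost (α r y : ℝ) : ℝ :=
  (1 - α) * (if r = -1 ∧ y = 1 then 1 else 0) + α * (if r = 1 ∧ y = -1 then 1 else 0)

/-- The cost-sensitive Bayes classifier of Example 1. -/
noncomputable def bayesCS (α x1 x2 : ℝ) : ℝ :=
  mySign (x1 - (x2 / 2) * Real.log (α / (1 - α)))

/-- Expected ℓ^α-loss of a classifier `g` under the distribution of Example 1: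
`Y ~ Bernoulli(1/2)` on `{-1,1}`, `x2 ~ U[0,1]`, `x1 | (y, x2) ~ N(y·x2, x2²)`. -/
noncomputable def jointRisk (α : ℝ) (g : ℝ × ℝ → ℝ) : ℝ :=
  ∫ x2 in Set.Ioc (0 : ℝ) 1, ∫ x1 : ℝ,
    (1 / 2) * (gaussPdf ((x1 - x2) / x2) / x2) * csCost α (g (x1, x2)) 1 +
    (1 / 2) * (gaussPdf ((x1 + x2) / x2) / x2) * csCost α (g (x1, x2)) (-1)



open MeasureTheory Set Real Function

lemma gaussPdf_eq (t : ℝ) :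
    gaussPdf t = (Real.sqrt (2 * Real.pi))⁻¹ * Real.exp (-(1/2) * t ^ 2) := by
  unfold gaussPdf; ring_nf

lemma gaussPdf_pos (t : ℝ) : 0 < gaussPdf t := by
  unfold gaussPdf
  have : (0:ℝ) < Real.sqrt (2 * Real.pi) := Real.sqrt_pos.2 (by positivity)
  positivity

lemma gaussPdf_continuous : Continuous gaussPdf := by
  unfold gaussPdf; fun_prop

lemma gaussPdf_integrable : Integrable gaussPdf := by
  have h : Integrable (fun t : ℝ => Real.exp (-(1/2) * t ^ 2)) :=
    integrable_exp_neg_mul_sq (by norm_num)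
  have he : gaussPdf = fun t => (Real.sqrt (2 * Real.pi))⁻¹ * Real.exp (-(1/2) * t ^ 2) :=
    funext gaussPdf_eq
  rw [he]
  exact h.const_mul _

lemma gaussPdf_integral : ∫ t : ℝ, gaussPdf t = 1 := by
  simp_rw [gaussPdf_eq]
  rw [MeasureTheory.integral_const_mul, integral_gaussian]
  have h2 : Real.pi / (1/2) = 2 * Real.pi := by ring
  rw [h2]
  have : Real.sqrt (2 * Real.pi) ≠ 0 := (Real.sqrt_pos.2 (by positivity)).ne'
  field_simp

lemma integral_subst (f : ℝ → ℝ) {σ : ℝ} (hσ : 0 < σ) (m : ℝ) (s : Set ℝ) :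
    ∫ x in s, f ((x - m) / σ) / σ = ∫ t in (fun t => σ * t + m) ⁻¹' s, f t := by
  have hemb : MeasurableEmbedding (fun t : ℝ => σ * t + m) :=
    (affineHomeomorph σ m hσ.ne').toMeasurableEquiv.measurableEmbedding
  have hmap : Measure.map (fun t : ℝ => σ * t + m) volume
      = ENNReal.ofReal σ⁻¹ • volume := by
    have h1 : (fun t : ℝ => σ * t + m) = (fun t : ℝ => t + m) ∘ (fun t : ℝ => σ * t) := rfl
    rw [h1, ← Measure.map_map (measurable_add_const m) (measurable_const_mul σ),
      Real.map_volume_mul_left hσ.ne', Measure.map_smul,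
      map_add_right_eq_self volume m, abs_of_pos (inv_pos.2 hσ)]
  have key := hemb.setIntegral_map (s := s) (g := fun y => f ((y - m) / σ) / σ) (μ := volume)
  rw [hmap] at key
  rw [MeasureTheory.Measure.restrict_smul] at key
  rw [MeasureTheory.integral_smul_measure] at key
  have hσt : (ENNReal.ofReal σ⁻¹).toReal = σ⁻¹ := ENNReal.toReal_ofReal (le_of_lt (inv_pos.2 hσ))
  rw [hσt] at key
  have hsimp : ∀ t : ℝ, f ((σ * t + m - m) / σ) / σ = f t / σ := by
    intro t; rw [add_sub_cancel_right, mul_div_cancel_left₀ _ hσ.ne']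
  simp_rw [hsimp] at key
  have hσ0 : σ⁻¹ ≠ 0 := (inv_pos.2 hσ).ne'
  conv at key => rhs; rw [MeasureTheory.integral_div]
  rw [smul_eq_mul] at key
  refine mul_left_cancel₀ hσ0 ?_
  rw [key, div_eq_inv_mul]

noncomputable def Phi (a : ℝ) : ℝ := ∫ x in Set.Iic a, gaussPdf x

lemma pdfShift_integrable {σ : ℝ} (hσ : 0 < σ) (m : ℝ) :
    Integrable (fun x : ℝ => gaussPdf ((x - m) / σ) / σ) := by
  have h1 : Integrable (fun y : ℝ => gaussPdf (y / σ)) :=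
    gaussPdf_integrable.comp_div hσ.ne'
  have h2 : Integrable (fun x : ℝ => gaussPdf ((x - m) / σ)) := by
    have := h1.comp_sub_right m
    simpa using this
  exact h2.div_const σ

lemma pdf_total {σ : ℝ} (hσ : 0 < σ) (m : ℝ) :
    ∫ x : ℝ, gaussPdf ((x - m) / σ) / σ = 1 := by
  have h := integral_subst gaussPdf hσ m Set.univ
  simpa [gaussPdf_integral] using h

lemma pdf_cdf {σ : ℝ} (hσ : 0 < σ) (m a : ℝ) :
    ∫ x in Set.Iic a, gaussPdf ((x - m) / σ) / σ = Phi ((a - m) / σ) := by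
  have h := integral_subst gaussPdf hσ m (Set.Iic a)
  have hp : (fun t : ℝ => σ * t + m) ⁻¹' (Set.Iic a) = Set.Iic ((a - m) / σ) := by
    ext t
    simp only [Set.mem_preimage, Set.mem_Iic]
    rw [le_div_iff₀ hσ]
    constructor <;> intro h' <;> nlinarith
  rw [h, hp]; rfl

lemma Phi_nonneg (a : ℝ) : 0 ≤ Phi a :=
  setIntegral_nonneg measurableSet_Iic (fun x _ => (gaussPdf_pos x).le)

lemma Phi_le_one (a : ℝ) : Phi a ≤ 1 := by
  rw [← gaussPdf_integral]
  exact setIntegral_le_integral gaussPdf_integrable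
    (Filter.Eventually.of_forall fun x => (gaussPdf_pos x).le)

lemma Phi_continuous : Continuous Phi := by
  have h : ∀ a b : ℝ, IntervalIntegrable gaussPdf volume a b :=
    fun a b => gaussPdf_integrable.intervalIntegrable
  have hc : Continuous fun b => ∫ x in (0:ℝ)..b, gaussPdf x :=
    intervalIntegral.continuous_primitive h 0
  have he : Phi = fun b => Phi 0 + ∫ x in (0:ℝ)..b, gaussPdf x := by
    funext b
    rw [← intervalIntegral.integral_Iic_sub_Iic gaussPdf_integrable.integrableOn
      gaussPdf_integrable.integrableOn]
    unfold Phi; ring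
  rw [he]
  exact continuous_const.add hc



noncomputable def Rfun (α x2 a : ℝ) : ℝ :=
  (1/2) * (1 - α) * Phi ((a - x2) / x2) + (1/2) * α * (1 - Phi ((a + x2) / x2))

lemma csCost_one (α t : ℝ) : csCost α (mySign t) 1 = if 0 ≤ t then 0 else (1 - α) := by
  unfold csCost mySign
  split_ifs with h1 h2 h3 h4 h5 h6 h7 <;> norm_num at * <;> linarith

lemma csCost_negone (α t : ℝ) : csCost α (mySign t) (-1) = if 0 ≤ t then α else 0 := by
  unfold csCost mySign
  split_ifs with h1 h2 h3 h4 h5 h6 h7 <;> norm_num at * <;> linarith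

lemma inner_eq (α : ℝ) {x2 : ℝ} (hx2 : 0 < x2) (a : ℝ) :
    (∫ x1 : ℝ,
      (1 / 2) * (gaussPdf ((x1 - x2) / x2) / x2) * csCost α (mySign (x1 - a)) 1 +
      (1 / 2) * (gaussPdf ((x1 + x2) / x2) / x2) * csCost α (mySign (x1 - a)) (-1))
    = Rfun α x2 a := by
  have hW : ∀ x1 : ℝ,
      (1 / 2) * (gaussPdf ((x1 - x2) / x2) / x2) * csCost α (mySign (x1 - a)) 1 +
      (1 / 2) * (gaussPdf ((x1 + x2) / x2) / x2) * csCost α (mySign (x1 - a)) (-1)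
      = if a ≤ x1 then (1/2) * α * (gaussPdf ((x1 + x2) / x2) / x2)
        else (1/2) * (1 - α) * (gaussPdf ((x1 - x2) / x2) / x2) := by
    intro x1
    rw [csCost_one, csCost_negone]
    by_cases h : a ≤ x1
    · rw [if_pos (by linarith : (0:ℝ) ≤ x1 - a), if_pos (by linarith : (0:ℝ) ≤ x1 - a),
        if_pos h]
      ring
    · rw [if_neg (by intro hh; exact h (by linarith)), if_neg (by intro hh; exact h (by linarith)),
        if_neg h]
      ring
  simp_rw [hW]
  have hp1 : Integrable (fun x : ℝ => gaussPdf ((x - x2) / x2) / x2) := pdfShift_integrable hx2 x2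
  have hp2 : Integrable (fun x : ℝ => gaussPdf ((x + x2) / x2) / x2) := by
    have := pdfShift_integrable hx2 (-x2)
    simpa [sub_neg_eq_add] using this
  set W : ℝ → ℝ := fun x1 => if a ≤ x1 then (1/2) * α * (gaussPdf ((x1 + x2) / x2) / x2)
      else (1/2) * (1 - α) * (gaussPdf ((x1 - x2) / x2) / x2) with hWdef
  have hIioEq : EqOn (fun x1 : ℝ => (1/2) * (1 - α) * (gaussPdf ((x1 - x2) / x2) / x2)) W
      (Set.Iio a) := fun x hx => (if_neg (not_le.2 hx)).symm
  have hIciEq : EqOn (fun x1 : ℝ => (1/2) * α * (gaussPdf ((x1 + x2) / x2) / x2)) W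
      (Set.Ici a) := fun x hx => (if_pos hx).symm
  have hIio : IntegrableOn W (Set.Iio a) :=
    ((hp1.const_mul _).integrableOn).congr_fun hIioEq measurableSet_Iio
  have hIci : IntegrableOn W (Set.Ici a) :=
    ((hp2.const_mul _).integrableOn).congr_fun hIciEq measurableSet_Ici
  rw [← intervalIntegral.integral_Iio_add_Ici hIio hIci]
  have h1 : ∫ x in Set.Iio a, W x = (1/2) * (1 - α) * Phi ((a - x2) / x2) := by
    rw [← setIntegral_congr_fun measurableSet_Iio hIioEq,
      setIntegral_congr_set Iio_ae_eq_Iic, MeasureTheory.integral_const_mul, pdf_cdf hx2 x2 a]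
  have h2 : ∫ x in Set.Ici a, W x = (1/2) * α * (1 - Phi ((a + x2) / x2)) := by
    rw [← setIntegral_congr_fun measurableSet_Ici hIciEq,
      setIntegral_congr_set Ioi_ae_eq_Ici.symm, MeasureTheory.integral_const_mul]
    have hsplit := intervalIntegral.integral_Iic_add_Ioi (b := a) hp2.integrableOn hp2.integrableOn
    have hcdf : ∫ x in Set.Iic a, gaussPdf ((x + x2) / x2) / x2 = Phi ((a + x2) / x2) := by
      have := pdf_cdf hx2 (-x2) a
      simpa [sub_neg_eq_add] using this
    have htot : ∫ x : ℝ, gaussPdf ((x + x2) / x2) / x2 = 1 := by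
      have := pdf_total hx2 (-x2)
      simpa [sub_neg_eq_add] using this
    rw [htot, hcdf] at hsplit
    rw [show (∫ x in Set.Ioi a, gaussPdf ((x + x2) / x2) / x2) = 1 - Phi ((a + x2) / x2) by
      linarith]
  rw [h1, h2]
  rfl

lemma gshift_cont (m σ : ℝ) : Continuous (fun x : ℝ => gaussPdf ((x - m) / σ) / σ) := by
  exact (gaussPdf_continuous.comp (by fun_prop)).div_const σ

lemma Rfun_diff (α : ℝ) {x2 : ℝ} (hx2 : 0 < x2) (a b : ℝ) :
    Rfun α x2 a - Rfun α x2 b = ∫ x in b..a,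
      ((1/2) * (1 - α) * (gaussPdf ((x - x2) / x2) / x2)
        - (1/2) * α * (gaussPdf ((x + x2) / x2) / x2)) := by
  have hx2' : x2 ≠ 0 := hx2.ne'
  have hA : Phi ((a - x2) / x2) - Phi ((b - x2) / x2)
      = ∫ x in ((b - x2)/x2)..((a - x2)/x2), gaussPdf x :=
    intervalIntegral.integral_Iic_sub_Iic gaussPdf_integrable.integrableOn
      gaussPdf_integrable.integrableOn
  have hB : Phi ((a + x2) / x2) - Phi ((b + x2) / x2)
      = ∫ x in ((b + x2)/x2)..((a + x2)/x2), gaussPdf x :=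
    intervalIntegral.integral_Iic_sub_Iic gaussPdf_integrable.integrableOn
      gaussPdf_integrable.integrableOn
  have hsubA : ∫ x in b..a, gaussPdf ((x - x2) / x2)
      = x2 * ∫ x in ((b - x2)/x2)..((a - x2)/x2), gaussPdf x := by
    have h := intervalIntegral.integral_comp_div_sub gaussPdf (a := b) (b := a) hx2' 1
    have harg : ∀ x : ℝ, x / x2 - 1 = (x - x2) / x2 := by
      intro x; field_simp
    simp_rw [harg] at h
    rw [h, smul_eq_mul]
  have hsubB : ∫ x in b..a, gaussPdf ((x + x2) / x2)
      = x2 * ∫ x in ((b + x2)/x2)..((a + x2)/x2), gaussPdf x := by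
    have h := intervalIntegral.integral_comp_div_sub gaussPdf (a := b) (b := a) hx2' (-1)
    have harg : ∀ x : ℝ, x / x2 - (-1) = (x + x2) / x2 := by
      intro x; field_simp; ring
    simp_rw [harg] at h
    rw [h, smul_eq_mul]
  have hc1 : Continuous fun x : ℝ => gaussPdf ((x - x2) / x2) :=
    gaussPdf_continuous.comp (by fun_prop)
  have hc2 : Continuous fun x : ℝ => gaussPdf ((x + x2) / x2) :=
    gaussPdf_continuous.comp (by fun_prop)
  have hsplit : ∫ x in b..a,
      ((1/2) * (1 - α) * (gaussPdf ((x - x2) / x2) / x2)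
        - (1/2) * α * (gaussPdf ((x + x2) / x2) / x2))
      = ((1/2) * (1 - α) / x2) * (∫ x in b..a, gaussPdf ((x - x2) / x2))
        - ((1/2) * α / x2) * (∫ x in b..a, gaussPdf ((x + x2) / x2)) := by
    have heq : ∀ x : ℝ, (1/2) * (1 - α) * (gaussPdf ((x - x2) / x2) / x2)
        - (1/2) * α * (gaussPdf ((x + x2) / x2) / x2)
        = ((1/2) * (1 - α) / x2) * gaussPdf ((x - x2) / x2)
          - ((1/2) * α / x2) * gaussPdf ((x + x2) / x2) := by
      intro x; ring
    simp_rw [heq]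
    rw [intervalIntegral.integral_sub ((hc1.intervalIntegrable b a).const_mul _)
      ((hc2.intervalIntegrable b a).const_mul _),
      intervalIntegral.integral_const_mul, intervalIntegral.integral_const_mul]
  rw [hsplit, hsubA, hsubB]
  have hR : Rfun α x2 a - Rfun α x2 b
      = (1/2) * (1 - α) * (Phi ((a - x2) / x2) - Phi ((b - x2) / x2))
        - (1/2) * α * (Phi ((a + x2) / x2) - Phi ((b + x2) / x2)) := by
    unfold Rfun; ring
  rw [hR, hA, hB]
  field_simp

lemma hfun_pos (α : ℝ) (hα : α ∈ Set.Ioo (0:ℝ) 1) {x2 : ℝ} (hx2 : 0 < x2) {x : ℝ}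
    (hx : x2 / 2 * Real.log (α / (1 - α)) < x) :
    0 < (1/2) * (1 - α) * (gaussPdf ((x - x2) / x2) / x2)
      - (1/2) * α * (gaussPdf ((x + x2) / x2) / x2) := by
  obtain ⟨hα0, hα1⟩ := hα
  have hα1' : (0:ℝ) < 1 - α := by linarith
  have hC : (0:ℝ) < (Real.sqrt (2 * Real.pi))⁻¹ :=
    inv_pos.2 (Real.sqrt_pos.2 (by positivity))
  set u : ℝ := (x - x2) / x2
  set v : ℝ := (x + x2) / x2
  have hL : Real.log (α / (1 - α)) = Real.log α - Real.log (1 - α) :=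
    Real.log_div hα0.ne' hα1'.ne'
  have hids : v ^ 2 / 2 - u ^ 2 / 2 = 2 * x / x2 := by
    show ((x + x2) / x2) ^ 2 / 2 - ((x - x2) / x2) ^ 2 / 2 = 2 * x / x2
    field_simp
    ring
  have hxx : Real.log α - Real.log (1 - α) < 2 * x / x2 := by
    rw [lt_div_iff₀ hx2]
    rw [hL] at hx
    nlinarith
  have hkey : Real.log α - v ^ 2 / 2 < Real.log (1 - α) - u ^ 2 / 2 := by linarith
  have hexp : α * Real.exp (-v ^ 2 / 2) < (1 - α) * Real.exp (-u ^ 2 / 2) := by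
    have e1 : α * Real.exp (-v ^ 2 / 2) = Real.exp (Real.log α + (-v ^ 2 / 2)) := by
      rw [Real.exp_add, Real.exp_log hα0]
    have e2 : (1 - α) * Real.exp (-u ^ 2 / 2) = Real.exp (Real.log (1 - α) + (-u ^ 2 / 2)) := by
      rw [Real.exp_add, Real.exp_log hα1']
    rw [e1, e2]
    apply Real.exp_lt_exp.2
    linarith
  have hg : gaussPdf u = (Real.sqrt (2 * Real.pi))⁻¹ * Real.exp (-u ^ 2 / 2) := rfl
  have hg2 : gaussPdf v = (Real.sqrt (2 * Real.pi))⁻¹ * Real.exp (-v ^ 2 / 2) := rfl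
  have hfin : (1/2) * α * (gaussPdf v / x2) < (1/2) * (1 - α) * (gaussPdf u / x2) := by
    rw [hg, hg2]
    have hpos : (0:ℝ) < (1/2) * ((Real.sqrt (2 * Real.pi))⁻¹ * x2⁻¹) := by positivity
    have h3 := mul_lt_mul_of_pos_left hexp hpos
    have e3 : (1/2) * α * ((Real.sqrt (2 * Real.pi))⁻¹ * Real.exp (-v ^ 2 / 2) / x2)
        = (1/2) * ((Real.sqrt (2 * Real.pi))⁻¹ * x2⁻¹) * (α * Real.exp (-v ^ 2 / 2)) := by ring
    have e4 : (1/2) * (1 - α) * ((Real.sqrt (2 * Real.pi))⁻¹ * Real.exp (-u ^ 2 / 2) / x2)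
        = (1/2) * ((Real.sqrt (2 * Real.pi))⁻¹ * x2⁻¹) * ((1 - α) * Real.exp (-u ^ 2 / 2)) := by
      ring
    linarith
  linarith

lemma hfun_neg (α : ℝ) (hα : α ∈ Set.Ioo (0:ℝ) 1) {x2 : ℝ} (hx2 : 0 < x2) {x : ℝ}
    (hx : x < x2 / 2 * Real.log (α / (1 - α))) :
    (1/2) * (1 - α) * (gaussPdf ((x - x2) / x2) / x2)
      - (1/2) * α * (gaussPdf ((x + x2) / x2) / x2) < 0 := by
  obtain ⟨hα0, hα1⟩ := hα
  have hα1' : (0:ℝ) < 1 - α := by linarith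
  set u : ℝ := (x - x2) / x2
  set v : ℝ := (x + x2) / x2
  have hL : Real.log (α / (1 - α)) = Real.log α - Real.log (1 - α) :=
    Real.log_div hα0.ne' hα1'.ne'
  have hids : v ^ 2 / 2 - u ^ 2 / 2 = 2 * x / x2 := by
    show ((x + x2) / x2) ^ 2 / 2 - ((x - x2) / x2) ^ 2 / 2 = 2 * x / x2
    field_simp
    ring
  have hxx : 2 * x / x2 < Real.log α - Real.log (1 - α) := by
    rw [div_lt_iff₀ hx2]
    rw [hL] at hx
    nlinarith
  have hkey : Real.log (1 - α) - u ^ 2 / 2 < Real.log α - v ^ 2 / 2 := by linarith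
  have hexp : (1 - α) * Real.exp (-u ^ 2 / 2) < α * Real.exp (-v ^ 2 / 2) := by
    have e1 : α * Real.exp (-v ^ 2 / 2) = Real.exp (Real.log α + (-v ^ 2 / 2)) := by
      rw [Real.exp_add, Real.exp_log hα0]
    have e2 : (1 - α) * Real.exp (-u ^ 2 / 2) = Real.exp (Real.log (1 - α) + (-u ^ 2 / 2)) := by
      rw [Real.exp_add, Real.exp_log hα1']
    rw [e1, e2]
    apply Real.exp_lt_exp.2
    linarith
  have hg : gaussPdf u = (Real.sqrt (2 * Real.pi))⁻¹ * Real.exp (-u ^ 2 / 2) := rfl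
  have hg2 : gaussPdf v = (Real.sqrt (2 * Real.pi))⁻¹ * Real.exp (-v ^ 2 / 2) := rfl
  have hfin : (1/2) * (1 - α) * (gaussPdf u / x2) < (1/2) * α * (gaussPdf v / x2) := by
    rw [hg, hg2]
    have hpos : (0:ℝ) < (1/2) * ((Real.sqrt (2 * Real.pi))⁻¹ * x2⁻¹) := by positivity
    have h3 := mul_lt_mul_of_pos_left hexp hpos
    have e3 : (1/2) * α * ((Real.sqrt (2 * Real.pi))⁻¹ * Real.exp (-v ^ 2 / 2) / x2)
        = (1/2) * ((Real.sqrt (2 * Real.pi))⁻¹ * x2⁻¹) * (α * Real.exp (-v ^ 2 / 2)) := by ring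
    have e4 : (1/2) * (1 - α) * ((Real.sqrt (2 * Real.pi))⁻¹ * Real.exp (-u ^ 2 / 2) / x2)
        = (1/2) * ((Real.sqrt (2 * Real.pi))⁻¹ * x2⁻¹) * ((1 - α) * Real.exp (-u ^ 2 / 2)) := by
      ring
    linarith
  linarith

lemma Rfun_lt (α : ℝ) (hα : α ∈ Set.Ioo (0:ℝ) 1) {x2 : ℝ} (hx2 : 0 < x2) {a : ℝ}
    (ha : a ≠ x2 / 2 * Real.log (α / (1 - α))) :
    Rfun α x2 (x2 / 2 * Real.log (α / (1 - α))) < Rfun α x2 a := by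
  set b := x2 / 2 * Real.log (α / (1 - α)) with hb
  set h : ℝ → ℝ := fun x => (1/2) * (1 - α) * (gaussPdf ((x - x2) / x2) / x2)
      - (1/2) * α * (gaussPdf ((x + x2) / x2) / x2) with hhdef
  have hdiff : Rfun α x2 a - Rfun α x2 b = ∫ x in b..a, h x := Rfun_diff α hx2 a b
  have hcont : Continuous h :=
    (continuous_const.mul (gshift_cont x2 x2)).sub
      (continuous_const.mul (by simpa [sub_neg_eq_add] using gshift_cont (-x2) x2))
  rcases lt_or_gt_of_ne ha with hlt | hgt
  · have hpos : 0 < ∫ x in a..b, (-h x) := by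
      apply intervalIntegral.intervalIntegral_pos_of_pos_on (hcont.neg.intervalIntegrable a b)
      · intro x hxm
        have := hfun_neg α hα hx2 (hxm.2 : x < b)
        simp only [hhdef, Pi.neg_apply]
        linarith
      · exact hlt
    have hneg : ∫ x in a..b, (-h x) = -∫ x in a..b, h x := intervalIntegral.integral_neg
    have hsym : ∫ x in b..a, h x = -∫ x in a..b, h x := intervalIntegral.integral_symm a b
    linarith
  · have hpos : 0 < ∫ x in b..a, h x := by
      apply intervalIntegral.intervalIntegral_pos_of_pos_on (hcont.intervalIntegrable b a)
      · intro x hxm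
        have := hfun_pos α hα hx2 (hxm.1 : b < x)
        simp only [hhdef]
        linarith
      · exact hgt
    linarith

lemma Rfun_bound (α : ℝ) (hα : α ∈ Set.Ioo (0:ℝ) 1) (x2 a : ℝ) : |Rfun α x2 a| ≤ 1 := by
  obtain ⟨hα0, hα1⟩ := hα
  have h1 := Phi_nonneg ((a - x2) / x2)
  have h2 := Phi_le_one ((a - x2) / x2)
  have h3 := Phi_nonneg ((a + x2) / x2)
  have h4 := Phi_le_one ((a + x2) / x2)
  rw [abs_le]
  unfold Rfun
  constructor <;> nlinarith

lemma Rfun_meas (α : ℝ) (c d : ℝ) : Measurable (fun x2 : ℝ => Rfun α x2 (c * x2 + d)) := by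
  unfold Rfun
  have hm : Measurable fun x2 : ℝ => (c * x2 + d - x2) / x2 :=
    ((measurable_id.const_mul c).add_const d |>.sub measurable_id).div measurable_id
  have hm2 : Measurable fun x2 : ℝ => (c * x2 + d + x2) / x2 :=
    ((measurable_id.const_mul c).add_const d |>.add measurable_id).div measurable_id
  exact (measurable_const.mul (Phi_continuous.measurable.comp hm)).add
    (measurable_const.mul (measurable_const.sub (Phi_continuous.measurable.comp hm2)))




theorem stmt5 (α τ : ℝ) (hα : α ∈ Set.Ioo (0 : ℝ) 1) (hαhalf : α ≠ 1 / 2) :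
    jointRisk α (fun x => bayesCS α x.1 x.2) < jointRisk α (fun x => mySign (x.1 + τ)) := by
  obtain ⟨hα0, hα1⟩ := hα
  have hα1' : (0:ℝ) < 1 - α := by linarith
  have hLne : Real.log (α / (1 - α)) ≠ 0 := by
    intro h0
    have hqpos : 0 < α / (1 - α) := div_pos hα0 hα1'
    rcases Real.log_eq_zero.1 h0 with h | h | h
    · linarith
    · have : α = 1 - α := by
        field_simp at h
        linarith
      exact hαhalf (by linarith)
    · linarith
  have hbayes : jointRisk α (fun x => bayesCS α x.1 x.2)
      = ∫ x2 in Set.Ioc (0:ℝ) 1, Rfun α x2 (x2 / 2 * Real.log (α / (1 - α))) := by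
    unfold jointRisk
    refine setIntegral_congr_fun measurableSet_Ioc (fun x2 hx2 => ?_)
    have h := inner_eq α hx2.1 (x2 / 2 * Real.log (α / (1 - α)))
    simpa [bayesCS] using h
  have hτ : jointRisk α (fun x => mySign (x.1 + τ))
      = ∫ x2 in Set.Ioc (0:ℝ) 1, Rfun α x2 (-τ) := by
    unfold jointRisk
    refine setIntegral_congr_fun measurableSet_Ioc (fun x2 hx2 => ?_)
    have h := inner_eq α hx2.1 (-τ)
    simpa [sub_neg_eq_add] using h
  have hfin : volume (Set.Ioc (0:ℝ) 1) ≠ ⊤ := by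
    simp [Real.volume_Ioc]
  have hmT : Measurable (fun x2 : ℝ => Rfun α x2 (-τ)) := by
    have := Rfun_meas α 0 (-τ)
    simpa using this
  have hmB : Measurable (fun x2 : ℝ => Rfun α x2 (x2 / 2 * Real.log (α / (1 - α)))) := by
    have h := Rfun_meas α (Real.log (α / (1 - α)) / 2) 0
    have he : (fun x2 : ℝ => Rfun α x2 (Real.log (α / (1 - α)) / 2 * x2 + 0))
        = fun x2 : ℝ => Rfun α x2 (x2 / 2 * Real.log (α / (1 - α))) := by
      funext x2; congr 1; ring
    rwa [he] at h
  have hintT : IntegrableOn (fun x2 : ℝ => Rfun α x2 (-τ)) (Set.Ioc (0:ℝ) 1) :=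
    Measure.integrableOn_of_bounded hfin hmT.aestronglyMeasurable
      (ae_of_all _ fun x2 => by
        rw [Real.norm_eq_abs]; exact Rfun_bound α ⟨hα0, hα1⟩ x2 (-τ))
  have hintB : IntegrableOn (fun x2 : ℝ => Rfun α x2 (x2 / 2 * Real.log (α / (1 - α))))
      (Set.Ioc (0:ℝ) 1) :=
    Measure.integrableOn_of_bounded hfin hmB.aestronglyMeasurable
      (ae_of_all _ fun x2 => by
        rw [Real.norm_eq_abs]; exact Rfun_bound α ⟨hα0, hα1⟩ x2 _)
  have hle : ∀ x2 ∈ Set.Ioc (0:ℝ) 1,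
      Rfun α x2 (x2 / 2 * Real.log (α / (1 - α))) ≤ Rfun α x2 (-τ) := by
    intro x2 hx2
    by_cases h : -τ = x2 / 2 * Real.log (α / (1 - α))
    · rw [h]
    · exact (Rfun_lt α ⟨hα0, hα1⟩ hx2.1 h).le
  set D : ℝ → ℝ := fun x2 =>
    Rfun α x2 (-τ) - Rfun α x2 (x2 / 2 * Real.log (α / (1 - α))) with hDdef
  have hDpos : 0 < ∫ x2 in Set.Ioc (0:ℝ) 1, D x2 := by
    rw [setIntegral_pos_iff_support_of_nonneg_ae
      ((ae_restrict_iff' measurableSet_Ioc).2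
        (ae_of_all _ fun x2 hx2 => sub_nonneg.2 (hle x2 hx2)))
      (hintT.sub hintB)]
    set x0 : ℝ := -2 * τ / Real.log (α / (1 - α)) with hx0def
    have hsub : Set.Ioc (0:ℝ) 1 \ {x0} ⊆ Function.support D ∩ Set.Ioc (0:ℝ) 1 := by
      rintro x ⟨hx, hx0⟩
      refine ⟨?_, hx⟩
      have hneq : -τ ≠ x / 2 * Real.log (α / (1 - α)) := by
        intro he
        apply hx0
        simp only [Set.mem_singleton_iff, hx0def]
        rw [eq_div_iff hLne]
        nlinarith [he]
      have hlt := Rfun_lt α ⟨hα0, hα1⟩ hx.1 hneq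
      exact (sub_pos.2 hlt).ne'
    have h0 : (0:ENNReal) < volume (Set.Ioc (0:ℝ) 1 \ {x0}) := by
      rw [measure_diff_null (measure_singleton x0)]
      simp [Real.volume_Ioc]
    exact lt_of_lt_of_le h0 (measure_mono hsub)
  have hsubint : ∫ x2 in Set.Ioc (0:ℝ) 1, D x2
      = (∫ x2 in Set.Ioc (0:ℝ) 1, Rfun α x2 (-τ))
        - ∫ x2 in Set.Ioc (0:ℝ) 1, Rfun α x2 (x2 / 2 * Real.log (α / (1 - α))) :=
    MeasureTheory.integral_sub hintT hintB
  rw [hbayes, hτ]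
  linarith [hDpos, hsubint]
end

section
/- Let L : ℝ^d × Y → ℝ₊ embed a target loss ℓ : R × Y → ℝ₊ (both Y and R finite), and let ψ : ℝ^d → R be an α-separated link for some α > 0. Suppose for each label distribution p there is a Hoffman-type constant H_{L,p} ≥ 0 such that H_{L,p}·(C_L(u,p) − C*_L(p)) ≥ d_∞(u, Γ(p)) for all u ∈ ℝ^d, where Γ(p) = argmin_u E_{Y∼p} L(u,Y). Then for every p and every u ∈ ℝ^d, if the target regret C_ℓ(ψ(u), p) − C*_ℓ(p) > 0 then the surrogate regret C_L(u, p) − C*_L(p) > 0. -/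
theorem stmt7 {d : ℕ} {Y R : Type*} [Fintype Y] [Fintype R] [Nonempty Y] [Nonempty R]
    (L : (Fin d → ℝ) → Y → ℝ) (hLnn : ∀ u y, 0 ≤ L u y)
    (ℓ : R → Y → ℝ) (hℓnn : ∀ r y, 0 ≤ ℓ r y)
    -- L embeds ℓ via an injective embedding φ on a representative set S
    (S : Set R) (φ : R → (Fin d → ℝ)) (hφinj : Set.InjOn φ S)
    (hrep : ∀ p : Y → ℝ, (∀ y, 0 ≤ p y) → ∑ y, p y = 1 →
      ∃ r ∈ S, ∀ r' : R, ∑ y, p y * ℓ r y ≤ ∑ y, p y * ℓ r' y)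
    (hembed1 : ∀ r ∈ S, ∀ y, L (φ r) y = ℓ r y)
    (hembed2 : ∀ p : Y → ℝ, (∀ y, 0 ≤ p y) → ∑ y, p y = 1 → ∀ r ∈ S,
      ((∀ r' : R, ∑ y, p y * ℓ r y ≤ ∑ y, p y * ℓ r' y) ↔
        (∀ u : Fin d → ℝ, ∑ y, p y * L (φ r) y ≤ ∑ y, p y * L u y)))
    -- α-separated link ψ
    (ψ : (Fin d → ℝ) → R) (a : ℝ) (ha : 0 < a)
    (hsep : ∀ (u : Fin d → ℝ) (p : Y → ℝ), (∀ y, 0 ≤ p y) → ∑ y, p y = 1 →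
      ψ u ∉ {r : R | ∀ r' : R, ∑ y, p y * ℓ r y ≤ ∑ y, p y * ℓ r' y} →
      a ≤ Metric.infDist u {v : Fin d → ℝ | ∀ w : Fin d → ℝ,
            ∑ y, p y * L v y ≤ ∑ y, p y * L w y})
    -- Hoffman-type constants
    (H : (Y → ℝ) → ℝ) (hHnn : ∀ p, 0 ≤ H p)
    (hHoff : ∀ p : Y → ℝ, (∀ y, 0 ≤ p y) → ∑ y, p y = 1 → ∀ u : Fin d → ℝ,
      Metric.infDist u {v : Fin d → ℝ | ∀ w : Fin d → ℝ,
          ∑ y, p y * L v y ≤ ∑ y, p y * L w y}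
        ≤ H p * ((∑ y, p y * L u y) - ⨅ v : Fin d → ℝ, ∑ y, p y * L v y)) :
    -- nonzero target regret implies nonzero surrogate regret
    ∀ p : Y → ℝ, (∀ y, 0 ≤ p y) → ∑ y, p y = 1 → ∀ u : Fin d → ℝ,
      0 < (∑ y, p y * ℓ (ψ u) y) - (⨅ r : R, ∑ y, p y * ℓ r y) →
      0 < (∑ y, p y * L u y) - (⨅ v : Fin d → ℝ, ∑ y, p y * L v y) := by
  intro p hp hp1 u hreg
  -- ψ u is not a minimizer of the target risk
  have hnotmin : ψ u ∉ {r : R | ∀ r' : R, ∑ y, p y * ℓ r y ≤ ∑ y, p y * ℓ r' y} := by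
    intro hmem
    have hle : (∑ y, p y * ℓ (ψ u) y) ≤ ⨅ r : R, ∑ y, p y * ℓ r y :=
      le_ciInf hmem
    linarith
  have hsep' := hsep u p hp hp1 hnotmin
  have hHoff' := hHoff p hp hp1 u
  have hkey : 0 < H p * ((∑ y, p y * L u y) - ⨅ v : Fin d → ℝ, ∑ y, p y * L v y) := by
    linarith
  by_contra hc
  push_neg at hc
  have : H p * ((∑ y, p y * L u y) - ⨅ v : Fin d → ℝ, ∑ y, p y * L v y) ≤ 0 :=
    mul_nonpos_of_nonneg_of_nonpos (hHnn p) (by linarith)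
  linarith
end

section
/- Let A ∈ ℝ^{m×n} and define S(A,b) = {x ∈ ℝ^n : Ax ≤ b}. If S(A,b) is nonempty for all b in some set B, then there exists a constant H(A) ≥ 0 such that for all b ∈ B and all x ∈ ℝ^n, dist_q(x, S(A,b)) ≤ H(A)·‖(Ax − b)₊‖_q, where (v)₊ denotes the coordinatewise positive part (Hoffman's lemma). -/
open scoped RealInnerProductSpace
open Topology

section HoffmanAux

lemma cara_cone' {ι V : Type*} [AddCommGroup V] [Module ℝ V]
    (a : ι → V) (s : Finset ι) (lam : ι → ℝ) (h0 : ∀ i ∈ s, 0 ≤ lam i) :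
    ∃ t ⊆ s, LinearIndependent ℝ (fun i : t => a i) ∧
      ∃ mu : ι → ℝ, (∀ i ∈ t, 0 ≤ mu i) ∧ ∑ i ∈ t, mu i • a i = ∑ i ∈ s, lam i • a i := by
  classical
  induction s using Finset.strongInduction generalizing lam with
  | _ s ih =>
    by_cases hli : LinearIndependent ℝ (fun i : s => a i)
    · exact ⟨s, le_refl s, hli, lam, h0, rfl⟩
    · -- get a nontrivial relation with a positive coefficient
      obtain ⟨g, hg0, i₁, hi₁⟩ := Fintype.not_linearIndependent_iff.mp hli
      have key : ∃ c : ι → ℝ, (∑ i ∈ s, c i • a i = 0) ∧ ∃ i ∈ s, 0 < c i := by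
        set c : ι → ℝ := fun i => if h : i ∈ s then g ⟨i, h⟩ else 0 with hc
        have hsum : ∑ i ∈ s, c i • a i = 0 := by
          rw [← Finset.sum_coe_sort s (fun i => c i • a i)]
          rw [← hg0]
          exact Finset.sum_congr rfl fun i _ => by simp [hc, i.2]
        by_cases hpos : ∃ i ∈ s, 0 < c i
        · exact ⟨c, hsum, hpos⟩
        · refine ⟨-c, by simp [hsum], i₁, i₁.2, ?_⟩
          push_neg at hpos
          have h1 : c i₁ ≠ 0 := by simpa [hc, i₁.2] using hi₁
          have h2 : c i₁ ≤ 0 := hpos i₁ i₁.2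
          simp only [Pi.neg_apply]
          cases' lt_or_eq_of_le h2 with h h
          · linarith
          · exact absurd h h1
      obtain ⟨c, hcsum, hex⟩ := key
      set P := s.filter (fun i => 0 < c i) with hP
      have hPne : P.Nonempty := by
        obtain ⟨i, hi, hci⟩ := hex
        exact ⟨i, Finset.mem_filter.mpr ⟨hi, hci⟩⟩
      set θ := P.inf' hPne (fun i => lam i / c i) with hθ
      have hθ0 : 0 ≤ θ := by
        rw [hθ, Finset.le_inf'_iff]
        intro i hi
        have := Finset.mem_filter.mp hi
        exact div_nonneg (h0 i this.1) (le_of_lt this.2)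
      obtain ⟨i₀, hi₀P, hi₀⟩ := Finset.exists_mem_eq_inf' hPne (fun i => lam i / c i)
      have hi₀s : i₀ ∈ s := (Finset.mem_filter.mp hi₀P).1
      have hci₀ : 0 < c i₀ := (Finset.mem_filter.mp hi₀P).2
      set lam' : ι → ℝ := fun i => lam i - θ * c i with hlam'
      have h0' : ∀ i ∈ s.erase i₀, 0 ≤ lam' i := by
        intro i hi
        have his : i ∈ s := Finset.mem_of_mem_erase hi
        by_cases hci : 0 < c i
        · have hiP : i ∈ P := Finset.mem_filter.mpr ⟨his, hci⟩
          have : θ ≤ lam i / c i := by rw [hθ]; exact Finset.inf'_le _ hiP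
          have := (le_div_iff₀ hci).mp this
          simp only [hlam']; linarith
        · push_neg at hci
          have : θ * c i ≤ 0 := mul_nonpos_of_nonneg_of_nonpos hθ0 hci
          have := h0 i his
          simp only [hlam']; linarith
      have hzero : lam' i₀ = 0 := by
        have hθeq : θ = lam i₀ / c i₀ := hi₀
        simp only [hlam', hθeq]
        field_simp
        ring
      have hsum' : ∑ i ∈ s.erase i₀, lam' i • a i = ∑ i ∈ s, lam i • a i := by
        rw [Finset.sum_erase _ (by rw [hzero, zero_smul])]
        have : ∀ i ∈ s, lam' i • a i = lam i • a i - θ • (c i • a i) := by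
          intro i _; simp only [hlam', sub_smul, smul_smul]
        rw [Finset.sum_congr rfl this, Finset.sum_sub_distrib, ← Finset.smul_sum, hcsum,
          smul_zero, sub_zero]
      obtain ⟨t, hts, hli', mu, hmu0, hmusum⟩ :=
        ih (s.erase i₀) (Finset.erase_ssubset hi₀s) lam' h0'
      exact ⟨t, le_trans hts (Finset.erase_subset i₀ s), hli', mu, hmu0, by rw [hmusum, hsum']⟩


lemma mult_bound' {ι V : Type*} [Fintype ι] [NormedAddCommGroup V] [NormedSpace ℝ V]
    [FiniteDimensional ℝ V]
    (a : ι → V) (t : Finset ι) (hli : LinearIndependent ℝ (fun i : t => a i)) :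
    ∃ c, 0 ≤ c ∧ ∀ mu : ι → ℝ, (∀ i ∈ t, 0 ≤ mu i) →
      ∑ i ∈ t, mu i ≤ c * ‖∑ i ∈ t, mu i • a i‖ := by
  classical
  let φ : (t → ℝ) →ₗ[ℝ] V :=
    { toFun := fun g => ∑ i : t, g i • a i
      map_add' := by intro g h; simp [add_smul, Finset.sum_add_distrib]
      map_smul' := by intro r g; simp [smul_smul, Finset.smul_sum] }
  have hinj : Function.Injective φ := by
    intro g h hgh
    have hz : φ (g - h) = 0 := by rw [map_sub, hgh, sub_self]
    have : ∀ i, (g - h) i = 0 := by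
      have := Fintype.linearIndependent_iff.mp hli (g - h)
      exact this (by simpa [φ] using hz)
    funext i
    have := this i
    simpa [sub_eq_zero] using this
  let e := LinearEquiv.ofInjective φ hinj
  let ψ := LinearMap.toContinuousLinearMap (e.symm.toLinearMap)
  refine ⟨(t.card : ℝ) * ‖ψ‖, by positivity, ?_⟩
  intro mu hmu
  set g : t → ℝ := fun i => mu i with hg
  have hφg : φ g = ∑ i ∈ t, mu i • a i := by
    simp only [φ, LinearMap.coe_mk, AddHom.coe_mk]
    rw [← Finset.sum_coe_sort t (fun i => mu i • a i)]
    rfl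
  have hmem : φ g ∈ LinearMap.range φ := LinearMap.mem_range_self φ g
  have hψ : ψ ⟨φ g, hmem⟩ = g := by
    have : e g = ⟨φ g, hmem⟩ := by
      apply Subtype.ext
      simp [e, LinearEquiv.ofInjective_apply]
    simp [ψ, LinearMap.coe_toContinuousLinearMap', ← this]
  have hgnorm : ‖g‖ ≤ ‖ψ‖ * ‖∑ i ∈ t, mu i • a i‖ := by
    calc ‖g‖ = ‖ψ ⟨φ g, hmem⟩‖ := by rw [hψ]
    _ ≤ ‖ψ‖ * ‖(⟨φ g, hmem⟩ : LinearMap.range φ)‖ := ψ.le_opNorm _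
    _ = ‖ψ‖ * ‖∑ i ∈ t, mu i • a i‖ := by rw [← hφg]; rfl
  have hsum : ∑ i ∈ t, mu i ≤ (t.card : ℝ) * ‖g‖ := by
    rw [← Finset.sum_coe_sort t mu]
    have : ∀ i : t, mu i ≤ ‖g‖ := by
      intro i
      have h1 : ‖g i‖ ≤ ‖g‖ := norm_le_pi_norm g i
      have h2 : mu i ≤ |g i| := le_abs_self _
      simpa [Real.norm_eq_abs] using le_trans h2 h1
    calc ∑ i : t, mu i ≤ ∑ _i : t, ‖g‖ := Finset.sum_le_sum (fun i _ => this i)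
    _ = (t.card : ℝ) * ‖g‖ := by simp [mul_comm]
  calc ∑ i ∈ t, mu i ≤ (t.card : ℝ) * ‖g‖ := hsum
  _ ≤ (t.card : ℝ) * (‖ψ‖ * ‖∑ i ∈ t, mu i • a i‖) := by
      apply mul_le_mul_of_nonneg_left hgnorm (by positivity)
  _ = (t.card : ℝ) * ‖ψ‖ * ‖∑ i ∈ t, mu i • a i‖ := by ring

lemma farkas_cone' {ι : Type*} [Fintype ι] {V : Type*} [NormedAddCommGroup V]
    [InnerProductSpace ℝ V] [FiniteDimensional ℝ V]
    (a : ι → V) (I : Finset ι) (v : V)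
    (hv : ∀ d : V, (∀ i ∈ I, ⟪a i, d⟫ ≤ 0) → ⟪v, d⟫ ≤ 0) :
    ∃ lam : ι → ℝ, (∀ i ∈ I, 0 ≤ lam i) ∧ v = ∑ i ∈ I, lam i • a i := by
  classical
  set Kset : Set V :=
    {w | ∃ lam : ι → ℝ, (∀ i ∈ I, 0 ≤ lam i) ∧ w = ∑ i ∈ I, lam i • a i} with hKset
  have hKunion : Kset = ⋃ t : Finset ι,
      (if t ⊆ I ∧ LinearIndependent ℝ (fun i : t => a i) then
        {w | ∃ mu : ι → ℝ, (∀ i ∈ t, 0 ≤ mu i) ∧ w = ∑ i ∈ t, mu i • a i} else ∅) := by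
    ext w
    simp only [Set.mem_iUnion, hKset, Set.mem_setOf_eq]
    constructor
    · rintro ⟨lam, hlam, rfl⟩
      obtain ⟨t, htI, hli, mu, hmu, hsum⟩ := cara_cone' a I lam hlam
      refine ⟨t, ?_⟩
      rw [if_pos ⟨htI, hli⟩]
      exact ⟨mu, hmu, hsum.symm⟩
    · rintro ⟨t, hw⟩
      by_cases h : t ⊆ I ∧ LinearIndependent ℝ (fun i : t => a i)
      · rw [if_pos h] at hw
        obtain ⟨mu, hmu, rfl⟩ := hw
        refine ⟨fun i => if i ∈ t then mu i else 0, fun i _ => ?_, ?_⟩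
        · by_cases ht : i ∈ t
          · simpa [ht] using hmu i ht
          · simp [ht]
        · rw [← Finset.sum_subset h.1 (fun x _ hxt => by simp [hxt])]
          exact Finset.sum_congr rfl fun i hi => by simp [hi]
      · rw [if_neg h] at hw; exact absurd hw (Set.notMem_empty w)
  -- each piece is closed
  have hclosed : IsClosed Kset := by
    rw [hKunion]
    apply isClosed_iUnion_of_finite
    intro t
    split_ifs with h
    · obtain ⟨htI, hli⟩ := h
      let φ : (t → ℝ) →ₗ[ℝ] V :=
        { toFun := fun g => ∑ i : t, g i • a i
          map_add' := by intro g h; simp [add_smul, Finset.sum_add_distrib]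
          map_smul' := by intro r g; simp [smul_smul, Finset.smul_sum] }
      have hinj : Function.Injective φ := by
        intro g h hgh
        have hz : φ (g - h) = 0 := by rw [map_sub, hgh, sub_self]
        have h1 := Fintype.linearIndependent_iff.mp hli (g - h) (by simpa [φ] using hz)
        funext i
        simpa [sub_eq_zero] using h1 i
      have hemb : IsClosedEmbedding φ := LinearMap.isClosedEmbedding_of_injective
        (LinearMap.ker_eq_bot.mpr hinj)
      have hQ : IsClosed {g : t → ℝ | ∀ i, 0 ≤ g i} := by
        have : {g : t → ℝ | ∀ i, 0 ≤ g i} = ⋂ i, {g : t → ℝ | 0 ≤ g i} := by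
          ext g; simp [Set.mem_iInter]
        rw [this]
        exact isClosed_iInter fun i => isClosed_le continuous_const (continuous_apply i)
      have himg : {w | ∃ mu : ι → ℝ, (∀ i ∈ t, 0 ≤ mu i) ∧ w = ∑ i ∈ t, mu i • a i}
          = φ '' {g : t → ℝ | ∀ i, 0 ≤ g i} := by
        ext w
        simp only [Set.mem_image, Set.mem_setOf_eq]
        constructor
        · rintro ⟨mu, hmu, rfl⟩
          refine ⟨fun i => mu i, fun i => hmu i i.2, ?_⟩
          simp only [φ, LinearMap.coe_mk, AddHom.coe_mk]
          exact Finset.sum_coe_sort t (fun i => mu i • a i)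
        · rintro ⟨g, hg, rfl⟩
          refine ⟨fun i => if h : i ∈ t then g ⟨i, h⟩ else 0, fun i hi => by simp [hi, hg], ?_⟩
          simp only [φ, LinearMap.coe_mk, AddHom.coe_mk]
          rw [← Finset.sum_coe_sort t (fun i => (if h : i ∈ t then g ⟨i, h⟩ else 0) • a i)]
          exact (Finset.sum_congr rfl fun i _ => by simp [i.2]).symm
      rw [himg]
      exact hemb.isClosedMap _ hQ
    · exact isClosed_empty
  -- Kset is a convex cone
  let K : ConvexCone ℝ V :=
    { carrier := Kset
      smul_mem' := by
        rintro r hr w ⟨lam, hlam, rfl⟩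
        refine ⟨fun i => r * lam i, fun i hi => mul_nonneg hr.le (hlam i hi), ?_⟩
        rw [Finset.smul_sum]
        exact Finset.sum_congr rfl fun i _ => by rw [smul_smul]
      add_mem' := by
        rintro w ⟨lam, hlam, rfl⟩ w' ⟨lam', hlam', rfl⟩
        refine ⟨fun i => lam i + lam' i, fun i hi => add_nonneg (hlam i hi) (hlam' i hi), ?_⟩
        rw [← Finset.sum_add_distrib]
        exact Finset.sum_congr rfl fun i _ => by rw [add_smul] }
  have hne : (K : Set V).Nonempty :=
    ⟨0, ⟨fun _ => 0, fun i _ => le_refl 0, by simp⟩⟩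
  let C : ProperCone ℝ V :=
    { carrier := Kset
      add_mem' := fun hw hw' => K.add_mem' hw hw'
      zero_mem' := ⟨fun _ => 0, fun i _ => le_refl 0, by simp⟩
      smul_mem' := by
        rintro r w ⟨lam, hlam, rfl⟩
        refine ⟨fun i => (r : ℝ) * lam i, fun i hi => mul_nonneg r.2 (hlam i hi), ?_⟩
        change (r : ℝ) • ∑ i ∈ I, lam i • a i = _
        rw [Finset.smul_sum]
        exact Finset.sum_congr rfl fun i _ => by rw [smul_smul]
      isClosed' := hclosed }
  by_contra hcon
  have hvC : v ∉ C := by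
    rintro ⟨lam, hlam, hsum⟩
    exact hcon ⟨lam, hlam, hsum⟩
  obtain ⟨d, hd, hdv⟩ := C.hyperplane_separation' hvC
  · have had : ∀ i ∈ I, 0 ≤ ⟪a i, d⟫ := by
      intro i hi
      apply hd
      refine ⟨fun j => if j = i then 1 else 0, fun j _ => by by_cases h : j = i <;> simp [h], ?_⟩
      rw [Finset.sum_eq_single i (fun j _ hj => by simp [hj]) (fun h => absurd hi h)]
      simp
    have := hv (-d) (fun i hi => by rw [inner_neg_right]; linarith [had i hi])
    rw [inner_neg_right] at this
    linarith

end HoffmanAux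

/-- Hoffman's lemma. -/
theorem stmt8 {m n : ℕ} (A : Matrix (Fin m) (Fin n) ℝ) (B : Set (Fin m → ℝ))
    (hB : ∀ b ∈ B, {x : Fin n → ℝ | ∀ i, A.mulVec x i ≤ b i}.Nonempty) :
    ∃ H : ℝ, 0 ≤ H ∧ ∀ b ∈ B, ∀ x : Fin n → ℝ,
      Metric.infDist x {x' : Fin n → ℝ | ∀ i, A.mulVec x' i ≤ b i}
        ≤ H * ‖(fun i => max 0 (A.mulVec x i - b i) : Fin m → ℝ)‖ := by
  classical
  let eq2 := WithLp.equiv 2 (Fin n → ℝ)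
  let a : Fin m → EuclideanSpace ℝ (Fin n) := fun i => eq2.symm (fun j => A i j)
  have hinner : ∀ (y  : EuclideanSpace ℝ (Fin n)) (i : Fin m), ⟪a i, y⟫ = A.mulVec (eq2 y) i := by
    intro y i
    simp [a, eq2, PiLp.inner_apply, RCLike.inner_apply, Matrix.mulVec, dotProduct,
      WithLp.equiv_symm_apply, WithLp.ofLp_toLp, mul_comm]
  -- choose constants for each subset
  have hc : ∀ t : Finset (Fin m), ∃ c, 0 ≤ c ∧
      (LinearIndependent ℝ (fun i : t => a i) → ∀ mu : Fin m → ℝ, (∀ i ∈ t, 0 ≤ mu i) →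
        ∑ i ∈ t, mu i ≤ c * ‖∑ i ∈ t, mu i • a i‖) := by
    intro t
    by_cases h : LinearIndependent ℝ (fun i : t => a i)
    · obtain ⟨c, hc0, hcb⟩ := mult_bound' a t h
      exact ⟨c, hc0, fun _ => hcb⟩
    · exact ⟨0, le_refl 0, fun h' => absurd h' h⟩
  choose c hc0 hcb using hc
  set H := ∑ t : Finset (Fin m), c t with hH
  have hH0 : 0 ≤ H := Finset.sum_nonneg (fun t _ => hc0 t)
  have hHt : ∀ t : Finset (Fin m), c t ≤ H :=
    fun t => Finset.single_le_sum (fun t' _ => hc0 t') (Finset.mem_univ t)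
  -- sup-norm vs L2 comparison
  have hsup : ∀ w  : EuclideanSpace ℝ (Fin n), ‖eq2 w‖ ≤ ‖w‖ := by
    intro w
    rw [pi_norm_le_iff_of_nonneg (norm_nonneg w)]
    intro j
    rw [EuclideanSpace.norm_eq]
    have h1 : ‖eq2 w j‖ = Real.sqrt (‖w j‖ ^ 2) := by
      rw [Real.sqrt_sq (norm_nonneg _)]; rfl
    rw [h1]
    apply Real.sqrt_le_sqrt
    exact Finset.single_le_sum (fun i _ => sq_nonneg ‖w i‖) (Finset.mem_univ j)
  refine ⟨H, hH0, ?_⟩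
  intro b hb x
  set r := ‖(fun i => max 0 (A.mulVec x i - b i) : Fin m → ℝ)‖ with hr
  have hr0 : 0 ≤ r := norm_nonneg _
  set S : Set (EuclideanSpace ℝ (Fin n)) := {y | ∀ i, ⟪a i, y⟫ ≤ b i} with hS
  have hSne : S.Nonempty := by
    obtain ⟨y, hy⟩ := hB b hb
    refine ⟨eq2.symm y, fun i => ?_⟩
    rw [hinner, Equiv.apply_symm_apply]
    exact hy i
  have hSconv : Convex ℝ S := by
    have : S = ⋂ i, {y  : EuclideanSpace ℝ (Fin n) | ⟪a i, y⟫ ≤ b i} := by ext y; simp [hS, Set.mem_iInter]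
    rw [this]
    refine convex_iInter fun i => convex_halfSpace_le ?_ (b i)
    exact ⟨fun y z => inner_add_right _ _ _, fun r y => real_inner_smul_right _ _ _⟩
  have hSclosed : IsClosed S := by
    have : S = ⋂ i, {y  : EuclideanSpace ℝ (Fin n) | ⟪a i, y⟫ ≤ b i} := by ext y; simp [hS, Set.mem_iInter]
    rw [this]
    exact isClosed_iInter fun i =>
      isClosed_le (Continuous.inner continuous_const continuous_id) continuous_const
  set xE  : EuclideanSpace ℝ (Fin n) := eq2.symm x with hxE
  obtain ⟨v, hvS, hvmin⟩ :=
    exists_norm_eq_iInf_of_complete_convex hSne (hSclosed.isComplete) hSconv xE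
  have hnc : ∀ w ∈ S, ⟪xE - v, w - v⟫ ≤ 0 :=
    (norm_eq_iInf_iff_real_inner_le_zero hSconv hvS).mp hvmin
  have hvS' : ∀ i, ⟪a i, v⟫ ≤ b i := hvS
  set I : Finset (Fin m) := Finset.univ.filter (fun i => ⟪a i, v⟫ = b i) with hI
  -- normal cone condition
  have hfeas : ∀ d  : EuclideanSpace ℝ (Fin n), (∀ i ∈ I, ⟪a i, d⟫ ≤ 0) → ⟪xE - v, d⟫ ≤ 0 := by
    intro d hd
    have h1 : ∀ i : Fin m, ∃ δ : ℝ, 0 < δ ∧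
        ∀ ε : ℝ, 0 < ε → ε ≤ δ → ⟪a i, v⟫ + ε * ⟪a i, d⟫ ≤ b i := by
      intro i
      by_cases hi : i ∈ I
      · refine ⟨1, one_pos, fun ε hε _ => ?_⟩
        have h2 : ⟪a i, v⟫ = b i := (Finset.mem_filter.mp hi).2
        have h3 := hd i hi
        nlinarith
      · have h2 : ⟪a i, v⟫ < b i := by
          have hle := hvS' i
          have hne : ⟪a i, v⟫ ≠ b i := by simpa [hI, Finset.mem_filter] using hi
          exact lt_of_le_of_ne hle hne
        refine ⟨(b i - ⟪a i, v⟫) / (|⟪a i, d⟫| + 1), div_pos (by linarith) (by positivity), fun ε hε hεδ => ?_⟩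
        have h4 : ε * ⟪a i, d⟫ ≤ ε * (|⟪a i, d⟫| + 1) := by
          have := le_abs_self ⟪a i, d⟫
          apply mul_le_mul_of_nonneg_left _ hε.le
          linarith
        have h5 : ε * (|⟪a i, d⟫| + 1) ≤ b i - ⟪a i, v⟫ := by
          rw [← div_mul_cancel₀ (b i - ⟪a i, v⟫)
            (ne_of_gt (by positivity : (0:ℝ) < |⟪a i, d⟫| + 1))]
          exact mul_le_mul_of_nonneg_right hεδ (by positivity)
        linarith
    choose δ hδ0 hδ using h1
    have hεex : ∃ ε : ℝ, 0 < ε ∧ ∀ i, ε ≤ δ i := by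
      rcases isEmpty_or_nonempty (Fin m) with hm | hm
      · exact ⟨1, one_pos, fun i => hm.elim i⟩
      · refine ⟨min 1 (Finset.univ.inf' Finset.univ_nonempty δ), ?_, ?_⟩
        · apply lt_min one_pos
          rw [Finset.lt_inf'_iff]
          exact fun i _ => hδ0 i
        · exact fun i => le_trans (min_le_right _ _) (Finset.inf'_le δ (Finset.mem_univ i))
    obtain ⟨ε, hε, hεδ⟩ := hεex
    have hw : v + ε • d ∈ S := by
      intro i
      have h7 := hδ i ε hε (hεδ i)
      show ⟪a i, v + ε • d⟫ ≤ b i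
      rw [inner_add_right, real_inner_smul_right]
      exact h7
    have h6 := hnc _ hw
    rw [add_sub_cancel_left, real_inner_smul_right] at h6
    nlinarith
  obtain ⟨lam, hlam0, hlamv⟩ := farkas_cone' a I (xE - v) hfeas
  obtain ⟨t, htI, hli, mu, hmu0, hmusum⟩ := cara_cone' a I lam hlam0
  have hvrep : ∑ i ∈ t, mu i • a i = xE - v := by rw [hmusum, ← hlamv]
  -- residual bound on active rows
  have hres : ∀ i ∈ t, ⟪a i, xE⟫ - b i ≤ r := by
    intro i hi
    have h1 : ⟪a i, xE⟫ = A.mulVec x i := by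
      rw [hinner, hxE, Equiv.apply_symm_apply]
    have h2 : A.mulVec x i - b i ≤ max 0 (A.mulVec x i - b i) := le_max_right _ _
    have h3 : max 0 (A.mulVec x i - b i) ≤ r := by
      have := norm_le_pi_norm (fun i => max 0 (A.mulVec x i - b i) : Fin m → ℝ) i
      rw [Real.norm_eq_abs] at this
      exact le_trans (le_abs_self _) this
    rw [h1]; linarith
  have hkey : ‖xE - v‖ ^ 2 ≤ (∑ i ∈ t, mu i) * r := by
    have h1 : ‖xE - v‖ ^ 2 = ⟪xE - v, xE - v⟫ := (real_inner_self_eq_norm_sq _).symm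
    rw [h1]
    nth_rewrite 1 [← hvrep]
    rw [sum_inner]
    rw [Finset.sum_mul]
    apply Finset.sum_le_sum
    intro i hi
    rw [real_inner_smul_left]
    have hact : ⟪a i, v⟫ = b i := (Finset.mem_filter.mp (htI hi)).2
    have h2 : ⟪a i, xE - v⟫ = ⟪a i, xE⟫ - b i := by
      rw [inner_sub_right, hact]
    rw [h2]
    exact mul_le_mul_of_nonneg_left (hres i hi) (hmu0 i hi)
  have hSig : ∑ i ∈ t, mu i ≤ c t * ‖xE - v‖ := by
    have := hcb t hli mu hmu0
    rwa [hvrep] at this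
  have hnorm : ‖xE - v‖ ≤ H * r := by
    rcases eq_or_lt_of_le (norm_nonneg (xE - v)) with h | h
    · rw [← h]; positivity
    · have hA1 : (∑ i ∈ t, mu i) * r ≤ (c t * ‖xE - v‖) * r :=
        mul_le_mul_of_nonneg_right hSig hr0
      have hA2 : (c t * ‖xE - v‖) * r ≤ (H * ‖xE - v‖) * r :=
        mul_le_mul_of_nonneg_right
          (mul_le_mul_of_nonneg_right (hHt t) (norm_nonneg _)) hr0
      nlinarith
  -- conclude
  have hveq : eq2 v ∈ {x' : Fin n → ℝ | ∀ i, A.mulVec x' i ≤ b i} := by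
    intro i
    rw [← hinner]
    exact hvS' i
  calc Metric.infDist x {x' : Fin n → ℝ | ∀ i, A.mulVec x' i ≤ b i}
      ≤ dist x (eq2 v) := Metric.infDist_le_dist_of_mem hveq
    _ = ‖x - eq2 v‖ := dist_eq_norm _ _
    _ = ‖eq2 (xE - v)‖ := by congr 1
    _ ≤ ‖xE - v‖ := hsup _
    _ ≤ H * r := hnorm
end

section
/- Let L : ℝ^d × Y → ℝ₊ embed ℓ : R × Y → ℝ₊ via embedding φ : S → ℝ^d on a representative set S. Then for every p ∈ Δ(Y), the minimal expected surrogate loss equals the minimal expected target loss: inf_{u∈ℝ^d} E_{Y∼p} L(u,Y) = min_{r∈R} E_{Y∼p} ℓ(r,Y). -/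
theorem stmt14 {d : ℕ} {R Y : Type*} [Fintype R] [Fintype Y] [Nonempty R]
    (L : (Fin d → ℝ) → Y → ℝ) (hLnn : ∀ u y, 0 ≤ L u y)
    (ℓ : R → Y → ℝ) (hℓnn : ∀ r y, 0 ≤ ℓ r y)
    (S : Set R) (φ : R → (Fin d → ℝ)) (hφinj : Set.InjOn φ S)
    -- S is representative for ℓ
    (hrep : ∀ p : Y → ℝ, (∀ y, 0 ≤ p y) → ∑ y, p y = 1 →
      ∃ r ∈ S, ∀ r' : R, ∑ y, p y * ℓ r y ≤ ∑ y, p y * ℓ r' y)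
    -- L embeds ℓ via φ: (i) agreement at embedded points
    (hembed1 : ∀ r ∈ S, ∀ y, L (φ r) y = ℓ r y)
    -- (ii) matching minimizers
    (hembed2 : ∀ p : Y → ℝ, (∀ y, 0 ≤ p y) → ∑ y, p y = 1 → ∀ r ∈ S,
      ((∀ r' : R, ∑ y, p y * ℓ r y ≤ ∑ y, p y * ℓ r' y) ↔
        (∀ u : Fin d → ℝ, ∑ y, p y * L (φ r) y ≤ ∑ y, p y * L u y)))
    (p : Y → ℝ) (hp0 : ∀ y, 0 ≤ p y) (hp1 : ∑ y, p y = 1) :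
    (⨅ u : Fin d → ℝ, ∑ y, p y * L u y) = ⨅ r : R, ∑ y, p y * ℓ r y := by
  obtain ⟨r, hrS, hmin⟩ := hrep p hp0 hp1
  have hLmin : ∀ u : Fin d → ℝ, ∑ y, p y * L (φ r) y ≤ ∑ y, p y * L u y :=
    (hembed2 p hp0 hp1 r hrS).mp hmin
  have hbdd : BddBelow (Set.range fun u : Fin d → ℝ => ∑ y, p y * L u y) := by
    refine ⟨0, ?_⟩
    rintro _ ⟨u, rfl⟩
    exact Finset.sum_nonneg fun y _ => mul_nonneg (hp0 y) (hLnn u y)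
  have h1 : (⨅ u : Fin d → ℝ, ∑ y, p y * L u y) = ∑ y, p y * L (φ r) y :=
    le_antisymm (ciInf_le hbdd (φ r)) (le_ciInf hLmin)
  have h2 : (⨅ r' : R, ∑ y, p y * ℓ r' y) = ∑ y, p y * ℓ r y :=
    le_antisymm (ciInf_le (Finite.bddBelow_range _) r) (le_ciInf hmin)
  rw [h1, h2]
  exact Finset.sum_congr rfl fun y _ => by rw [hembed1 r hrS y]
end
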